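/- In the odd graph O_3 (the Petersen graph, whose vertices are the 2-element subsets of {1,2,3,4,5}): (a) there is no special walk of length 6 from the vertex {1,2} to itself whose first edge and last edge are both labeled 5; (b) there is no special walk of length 7 from the vertex {1,2} to itself whose first edge is labeled 5 and whose last edge is labeled 3; (c) there is no special walk of length 8 from the vertex {1,2} to the vertex {3,4} whose first edge and last edge are both labeled 5. Consequently, the length 9 in the prescribed-labels walk theorem for O_3 is best possible. -/

import Mathlib

/-- The odd graph `O_n`: vertices are the `(n-1)`-element subsets of
`{1, 2, …, 2n-1}` (modelled as `Fin (2*n-1)`), two vertices being adjacent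
iff the corresponding subsets are disjoint. -/
def OddGraph (n : ℕ) : SimpleGraph {s : Finset (Fin (2 * n - 1)) // s.card = n - 1} where
  Adj u v := Disjoint u.1 v.1 ∧ u ≠ v
  symm := ⟨fun u v h => ⟨h.1.symm, h.2.symm⟩⟩
  loopless := ⟨fun u h => h.2 rfl⟩

/-- The edge `uv` of the odd graph is labeled with `lab` iff `lab` lies in
neither `[u]` nor `[v]` (for an edge this element is unique). -/
def EdgeLabeled {n : ℕ} (u v : {s : Finset (Fin (2 * n - 1)) // s.card = n - 1})
    (lab : Fin (2 * n - 1)) : Prop :=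
  lab ∉ u.1 ∧ lab ∉ v.1

/-- A special walk: every two consecutive edges are distinct, i.e. there is no
immediate backtracking. -/
def IsSpecialWalk {V : Type*} {G : SimpleGraph V} {u v : V} (p : G.Walk u v) : Prop :=
  ∀ i, i + 2 ≤ p.length → p.getVert i ≠ p.getVert (i + 2)

/-- The vertex `{1,2}` of the Petersen graph `O_3` (elements of `{1,…,5}` are
modelled as `0,…,4` in `Fin 5`). -/
def v12 : {s : Finset (Fin (2 * 3 - 1)) // s.card = 3 - 1} := ⟨{0, 1}, by decide⟩

/-- The vertex `{3,4}` of the Petersen graph `O_3`. -/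
def v34 : {s : Finset (Fin (2 * 3 - 1)) // s.card = 3 - 1} := ⟨{2, 3}, by decide⟩

/-- The element `5` of `{1,…,5}`. -/
def e5 : Fin (2 * 3 - 1) := ⟨4, by norm_num⟩

/-- The element `3` of `{1,…,5}`. -/
def e3 : Fin (2 * 3 - 1) := ⟨2, by norm_num⟩

section DFS
variable {V : Type*} [DecidableEq V] {G : SimpleGraph V}

/-- DFS extension along a neighbor-list function `nb`. -/
def dfsExt (nb : V → List V) (fin : V → V → Bool) : ℕ → V → V → Bool
  | 0, prev, cur => fin prev cur
  | (k+1), prev, cur =>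
      (nb cur).any fun w => (decide (w ≠ prev)) && dfsExt nb fin k cur w

lemma dfsExt_sound (nb : V → List V) (hnb : ∀ u w : V, G.Adj u w → w ∈ nb u)
    (fin : V → V → Bool) :
    ∀ (k : ℕ) (cur b prev : V) (p : G.Walk cur b), p.length = k →
    (∀ i, i + 2 ≤ k → p.getVert i ≠ p.getVert (i + 2)) →
    (1 ≤ k → p.getVert 1 ≠ prev) →
    fin (if k = 0 then prev else p.getVert (k - 1)) b = true →
    dfsExt nb fin k prev cur = true := by
  intro k
  induction k with
  | zero =>
    intro cur b prev p hp _ _ hfin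
    have hb : b = cur := by
      have := p.getVert_length
      rw [hp] at this
      rw [← this, p.getVert_zero]
    subst hb
    simpa [dfsExt] using hfin
  | succ k ih =>
    intro cur b prev p hp hspec hnbk hfin
    cases p with
    | nil => simp at hp
    | @cons _ w _ h q =>
      have hq : q.length = k := by simpa using hp
      have hget1 : (SimpleGraph.Walk.cons h q).getVert 1 = q.getVert 0 :=
        SimpleGraph.Walk.getVert_cons_succ q h
      rw [dfsExt, List.any_eq_true]
      refine ⟨w, hnb cur w h, ?_⟩
      rw [Bool.and_eq_true, decide_eq_true_iff]
      constructor
      · intro hw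
        apply hnbk (by omega)
        rw [hget1, q.getVert_zero, hw]
      · apply ih w b cur q hq
        · intro i hi
          have := hspec (i + 1) (by omega)
          simpa [SimpleGraph.Walk.getVert_cons_succ] using this
        · intro hk
          have := hspec 0 (by omega)
          simp only [SimpleGraph.Walk.getVert_zero,
            SimpleGraph.Walk.getVert_cons_succ] at this
          exact fun hc => this (by rw [hc])
        · rcases Nat.eq_zero_or_pos k with hk | hk
          · subst hk
            simpa [SimpleGraph.Walk.getVert_zero] using hfin
          · have h1 : k = (k - 1) + 1 := by omega
            have hgv : (SimpleGraph.Walk.cons h q).getVert (k + 1 - 1)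
                = q.getVert (k - 1) := by
              rw [Nat.add_sub_cancel]
              conv_lhs => rw [h1]
              rw [SimpleGraph.Walk.getVert_cons_succ]
            simp only [if_neg (by omega : ¬ k + 1 = 0)] at hfin
            rw [if_neg (by omega : ¬ k = 0), ← hgv]
            exact hfin

/-- Full check for a special walk of length `n` from `a` to `b`, with
first-edge test `fir` and last-edge test `las`. -/
def dfsCheck (nb : V → List V) (a b : V) (n : ℕ) (fir las : V → V → Bool) : Bool :=
  (nb a).any fun x =>
    fir a x && dfsExt nb (fun p c => las p c && decide (c = b)) (n - 1) a x

lemma dfsCheck_sound (nb : V → List V) (hnb : ∀ u w : V, G.Adj u w → w ∈ nb u)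
    {n : ℕ} (hn : 2 ≤ n) (a b : V) (p : G.Walk a b)
    (hp : p.length = n) (hspec : IsSpecialWalk p) (fir las : V → V → Bool)
    (h1 : fir a (p.getVert 1) = true) (h2 : las (p.getVert (n - 1)) b = true) :
    dfsCheck nb a b n fir las = true := by
  unfold IsSpecialWalk at hspec
  rw [hp] at hspec
  cases p with
  | nil => simp at hp; omega
  | @cons _ w _ h q =>
    have hq : q.length = n - 1 := by simp at hp; omega
    have hget1 : (SimpleGraph.Walk.cons h q).getVert 1 = w := by
      rw [SimpleGraph.Walk.getVert_cons_succ, q.getVert_zero]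
    rw [dfsCheck, List.any_eq_true]
    refine ⟨w, hnb a w h, ?_⟩
    rw [Bool.and_eq_true]
    refine ⟨by rw [← hget1]; exact h1, ?_⟩
    apply dfsExt_sound nb hnb _ (n - 1) w b a q hq
    · intro i hi
      have := hspec (i + 1) (by omega)
      simpa [SimpleGraph.Walk.getVert_cons_succ] using this
    · intro hk
      have := hspec 0 (by omega)
      simp only [SimpleGraph.Walk.getVert_zero,
        SimpleGraph.Walk.getVert_cons_succ] at this
      exact fun hc => this (by rw [hc])
    · rw [if_neg (by omega : ¬ n - 1 = 0), Bool.and_eq_true, decide_eq_true_iff]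
      refine ⟨?_, rfl⟩
      have h1' : n - 1 = (n - 2) + 1 := by omega
      have hgv : (SimpleGraph.Walk.cons h q).getVert (n - 1) = q.getVert (n - 2) := by
        rw [h1', SimpleGraph.Walk.getVert_cons_succ]
      rw [show n - 1 - 1 = n - 2 by omega, ← hgv]
      exact h2

end DFS

instance : DecidableRel (OddGraph 3).Adj := fun u v =>
  inferInstanceAs (Decidable (Disjoint u.1 v.1 ∧ u ≠ v))

instance {n : ℕ} (u v : {s : Finset (Fin (2 * n - 1)) // s.card = n - 1})
    (lab : Fin (2 * n - 1)) : Decidable (EdgeLabeled u v lab) :=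
  inferInstanceAs (Decidable (lab ∉ u.1 ∧ lab ∉ v.1))

abbrev PV := {s : Finset (Fin (2 * 3 - 1)) // s.card = 3 - 1}

/-- All ten vertices of the Petersen graph. -/
def allPV : List PV :=
  [⟨{0,1}, by decide⟩, ⟨{0,2}, by decide⟩, ⟨{0,3}, by decide⟩, ⟨{0,4}, by decide⟩,
   ⟨{1,2}, by decide⟩, ⟨{1,3}, by decide⟩, ⟨{1,4}, by decide⟩,
   ⟨{2,3}, by decide⟩, ⟨{2,4}, by decide⟩, ⟨{3,4}, by decide⟩]

def nbP (u : PV) : List PV := allPV.filter fun v => decide ((OddGraph 3).Adj u v)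

lemma nbP_complete : ∀ u w : PV, (OddGraph 3).Adj u w → w ∈ nbP u := by
  intro u w h
  rw [nbP, List.mem_filter]
  refine ⟨?_, decide_eq_true h⟩
  -- every vertex is in allPV
  have hall : ∀ v : PV, v ∈ allPV := by decide
  exact hall w

set_option maxRecDepth 100000 in
lemma checkA_false : dfsCheck nbP v12 v12 6
    (fun p c => decide (EdgeLabeled p c e5)) (fun p c => decide (EdgeLabeled p c e5)) = false := by
  decide

set_option maxRecDepth 100000 in
lemma checkB_false : dfsCheck nbP v12 v12 7
    (fun p c => decide (EdgeLabeled p c e5)) (fun p c => decide (EdgeLabeled p c e3)) = false := by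
  decide

set_option maxRecDepth 100000 in
lemma checkC_false : dfsCheck nbP v12 v34 8
    (fun p c => decide (EdgeLabeled p c e5)) (fun p c => decide (EdgeLabeled p c e5)) = false := by
  decide

/-- Sharpness of the length `9` in the prescribed-labels walk theorem for `O₃`:
(a) there is no special walk of length 6 from `{1,2}` to itself whose first and
last edges are labeled `5`; (b) there is no special walk of length 7 from
`{1,2}` to itself whose first edge is labeled `5` and last edge is labeled `3`;
(c) there is no special walk of length 8 from `{1,2}` to `{3,4}` whose first
and last edges are labeled `5`. -/
theorem O3_sharpness :
    (¬ ∃ p : (OddGraph 3).Walk v12 v12, p.length = 6 ∧ IsSpecialWalk p ∧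
        EdgeLabeled v12 (p.getVert 1) e5 ∧
        EdgeLabeled (p.getVert (p.length - 1)) v12 e5) ∧
    (¬ ∃ p : (OddGraph 3).Walk v12 v12, p.length = 7 ∧ IsSpecialWalk p ∧
        EdgeLabeled v12 (p.getVert 1) e5 ∧
        EdgeLabeled (p.getVert (p.length - 1)) v12 e3) ∧
    (¬ ∃ p : (OddGraph 3).Walk v12 v34, p.length = 8 ∧ IsSpecialWalk p ∧
        EdgeLabeled v12 (p.getVert 1) e5 ∧
        EdgeLabeled (p.getVert (p.length - 1)) v34 e5) := by
  refine ⟨?_, ?_, ?_⟩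
  · rintro ⟨p, hlen, hspec, h1, h2⟩
    have := dfsCheck_sound nbP nbP_complete (by norm_num) v12 v12 p hlen hspec
      (fun p c => decide (EdgeLabeled p c e5)) (fun p c => decide (EdgeLabeled p c e5))
      (decide_eq_true h1) (decide_eq_true (by rw [hlen] at h2; exact h2))
    rw [checkA_false] at this
    exact Bool.false_ne_true this
  · rintro ⟨p, hlen, hspec, h1, h2⟩
    have := dfsCheck_sound nbP nbP_complete (by norm_num) v12 v12 p hlen hspec
      (fun p c => decide (EdgeLabeled p c e5)) (fun p c => decide (EdgeLabeled p c e3))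
      (decide_eq_true h1) (decide_eq_true (by rw [hlen] at h2; exact h2))
    rw [checkB_false] at this
    exact Bool.false_ne_true this
  · rintro ⟨p, hlen, hspec, h1, h2⟩
    have := dfsCheck_sound nbP nbP_complete (by norm_num) v12 v34 p hlen hspec
      (fun p c => decide (EdgeLabeled p c e5)) (fun p c => decide (EdgeLabeled p c e5))
      (decide_eq_true h1) (decide_eq_true (by rw [hlen] at h2; exact h2))
    rw [checkC_false] at this
    exact Bool.false_ne_true this
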